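/- arXiv:1910.04841 — 7 statements merged into one kernel-verified Lean document; each statement's English description precedes it below -/
import Mathlib

section
/- The function f(x, t) = x·t·(2^(L/(x·t)) − 1) defined for x > 0, t > 0 is convex on (0,∞)², for any fixed L > 0. -/
/-!
With `c = L log 2` and `y = log x + log t`, the function equals `k (y)` where
`k y = e^y (exp (c e^{-y}) - 1)`. Since `log x + log t` is concave on the open quadrant, it suffices
that `k` is convex and antitone on `ℝ`. Writing `w = c e^{-y}`, one gets
`k' y = e^y (e^w (1 - w) - 1) ≤ 0` because `e^{-w} ≥ 1 - w`, and
`k'' y = e^y (e^w (1 - w + w²) - 1) ≥ 0` because `e^w ≥ 1 + w` and `(1 + w)(1 - w + w²) = 1 + w³`.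
-/

open Real Set

lemma exp_mul_one_sub_le_one (w : ℝ) : exp w * (1 - w) ≤ 1 := by
  have h := mul_le_mul_of_nonneg_left (one_sub_le_exp_neg w) (exp_pos w).le
  rwa [← exp_add, add_neg_cancel, exp_zero] at h

lemma one_le_exp_mul_one_sub_add_sq {w : ℝ} (hw : 0 ≤ w) : 1 ≤ exp w * (1 - w + w ^ 2) := by
  have hq : 0 ≤ 1 - w + w ^ 2 := by nlinarith [sq_nonneg (w - 1)]
  calc 1 ≤ (w + 1) * (1 - w + w ^ 2) := by nlinarith [pow_nonneg hw 3]
    _ ≤ exp w * (1 - w + w ^ 2) := mul_le_mul_of_nonneg_right (add_one_le_exp w) hq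

noncomputable def energyLog (c y : ℝ) : ℝ := exp y * (exp (c * exp (-y)) - 1)

lemma hasDerivAt_mul_exp_neg (c y : ℝ) :
    HasDerivAt (fun y => c * exp (-y)) (-(c * exp (-y))) y := by
  simpa using (hasDerivAt_neg y).exp.const_mul c

lemma hasDerivAt_energyLog (c y : ℝ) :
    HasDerivAt (energyLog c) (exp y * (exp (c * exp (-y)) * (1 - c * exp (-y)) - 1)) y :=
  ((hasDerivAt_exp y).mul ((hasDerivAt_mul_exp_neg c y).exp.sub_const 1)).congr_deriv (by ring)

lemma hasDerivAt_deriv_energyLog (c y : ℝ) :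
    HasDerivAt (fun y => exp y * (exp (c * exp (-y)) * (1 - c * exp (-y)) - 1))
      (exp y * (exp (c * exp (-y)) * (1 - c * exp (-y) + (c * exp (-y)) ^ 2) - 1)) y := by
  have hw := hasDerivAt_mul_exp_neg c y
  exact ((hasDerivAt_exp y).mul ((hw.exp.mul (hw.const_sub 1)).sub_const 1)).congr_deriv
    (by simp only [Pi.mul_apply]; ring)

lemma antitone_energyLog (c : ℝ) : Antitone (energyLog c) :=
  antitone_of_hasDerivAt_nonpos (hasDerivAt_energyLog c) fun y =>
    mul_nonpos_of_nonneg_of_nonpos (exp_pos y).le (sub_nonpos.2 (exp_mul_one_sub_le_one _))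

lemma convexOn_energyLog {c : ℝ} (hc : 0 ≤ c) : ConvexOn ℝ univ (energyLog c) := by
  refine convexOn_of_hasDerivWithinAt2_nonneg convex_univ
    (fun y _ => (hasDerivAt_energyLog c y).continuousAt.continuousWithinAt)
    (fun y _ => (hasDerivAt_energyLog c y).hasDerivWithinAt)
    (fun y _ => (hasDerivAt_deriv_energyLog c y).hasDerivWithinAt) fun y _ => ?_
  exact mul_nonneg (exp_pos y).le
    (sub_nonneg.2 (one_le_exp_mul_one_sub_add_sq (mul_nonneg hc (exp_pos _).le)))

lemma concaveOn_log_add_log :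
    ConcaveOn ℝ (Ioi 0 ×ˢ Ioi 0) (fun p : ℝ × ℝ => log p.1 + log p.2) := by
  have hconvex : Convex ℝ (Ioi (0 : ℝ) ×ˢ Ioi (0 : ℝ)) := (convex_Ioi 0).prod (convex_Ioi 0)
  have h₁ := strictConcaveOn_log_Ioi.concaveOn.comp_linearMap (LinearMap.fst ℝ ℝ ℝ)
  have h₂ := strictConcaveOn_log_Ioi.concaveOn.comp_linearMap (LinearMap.snd ℝ ℝ ℝ)
  exact (h₁.subset inter_subset_left hconvex).add (h₂.subset inter_subset_right hconvex)

lemma energyLog_log_add_log {x t : ℝ} (hx : 0 < x) (ht : 0 < t) (c : ℝ) :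
    energyLog c (log x + log t) = x * t * (exp (c / (x * t)) - 1) := by
  rw [energyLog, ← log_mul hx.ne' ht.ne', ← log_inv, exp_log (mul_pos hx ht),
    exp_log (inv_pos.2 (mul_pos hx ht)), div_eq_mul_inv]

/-- `f(x,t) = x·t·(2^(L/(x·t)) − 1)` is convex on (0,∞)², for fixed L > 0. -/
theorem stmt1 (L : ℝ) (hL : 0 < L) :
    ConvexOn ℝ (Set.Ioi (0 : ℝ) ×ˢ Set.Ioi (0 : ℝ))
      (fun p : ℝ × ℝ => p.1 * p.2 * ((2 : ℝ) ^ (L / (p.1 * p.2)) - 1)) := by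
  have hc : 0 ≤ L * log 2 := mul_nonneg hL.le (log_nonneg one_le_two)
  have himage : (fun p : ℝ × ℝ => log p.1 + log p.2) '' (Ioi 0 ×ˢ Ioi 0) = univ :=
    eq_univ_of_forall fun y => ⟨(exp y, 1), by simp [exp_pos]⟩
  have h := ConvexOn.comp_concaveOn (himage ▸ convexOn_energyLog hc)
    concaveOn_log_add_log ((antitone_energyLog _).antitoneOn _)
  refine h.congr fun p ⟨hx, ht⟩ => ?_
  simp only [Function.comp_apply, energyLog_log_add_log hx ht, rpow_def_of_pos two_pos,
    mul_div_assoc, mul_comm L]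
end

section
/- For fixed L > 0 and x > 0, the Hessian of f(x,t) = x·t·(2^(L/(xt)) − 1) at any point (x,t) with x,t > 0 has positive determinant. Specifically, det H = H₁₁·H₂₂ − H₁₂² > 0 where H₁₁ = (ln 2)²·2^(L/(tx))·L²/(t·x³), H₂₂ = (ln 2)²·2^(L/(xt))·L²/(x·t³), and H₁₂ = 2^(L/(xt)) − 1 + (ln 2)²·(L²/(x²t²))·2^(L/(xt)) − ln 2·(L/(xt))·2^(L/(xt)). -/
/-- Positivity of the Hessian determinant of `f(x,t) = x·t·(2^(L/(xt)) − 1)`. -/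
theorem stmt5 (L x t : ℝ) (hL : 0 < L) (hx : 0 < x) (ht : 0 < t) :
    ((Real.log 2) ^ 2 * (2 : ℝ) ^ (L / (t * x)) * (L ^ 2 / (t * x ^ 3))) *
      ((Real.log 2) ^ 2 * (2 : ℝ) ^ (L / (x * t)) * (L ^ 2 / (x * t ^ 3))) -
    ((2 : ℝ) ^ (L / (x * t)) - 1 +
      (Real.log 2) ^ 2 * (L ^ 2 / (x ^ 2 * t ^ 2)) * (2 : ℝ) ^ (L / (x * t)) -
      Real.log 2 * (L / (x * t)) * (2 : ℝ) ^ (L / (x * t))) ^ 2 > 0 := by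
  have hxt : 0 < x * t := mul_pos hx ht
  rw [show L / (t * x) = L / (x * t) by rw [mul_comm]]
  set u := L / (x * t) with hu
  have hu0 : 0 < u := div_pos hL hxt
  have hc0 : 0 < Real.log 2 := Real.log_pos (by norm_num)
  set c := Real.log 2 with hc
  have h2 : (2 : ℝ) ^ u = Real.exp (c * u) := by
    rw [Real.rpow_def_of_pos (by norm_num)]
  rw [h2]
  set y := c * u with hy
  have hy0 : 0 < y := mul_pos hc0 hu0
  set A := Real.exp y with hA
  have hApos : 0 < A := Real.exp_pos y
  have hA1 : 1 + y < A := by have := Real.add_one_lt_exp hy0.ne'; linarith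
  have hA2 : A * (1 - y) < 1 := by
    have h := Real.add_one_lt_exp (show (-y) ≠ 0 by linarith)
    have hinv : A * Real.exp (-y) = 1 := by
      rw [← Real.exp_add]; simp
    nlinarith [Real.exp_pos (-y)]
  have key : (y ^ 2 * A) ^ 2 - (A - 1 + y ^ 2 * A - y * A) ^ 2 > 0 := by
    have hfac : (y ^ 2 * A) ^ 2 - (A - 1 + y ^ 2 * A - y * A) ^ 2 =
        (1 - A * (1 - y)) * (A * (1 + 2 * y ^ 2 - y) - 1) := by ring
    rw [hfac]
    have h1 : 0 < 1 - A * (1 - y) := by linarith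
    have h2' : (0:ℝ) < A * (1 + 2 * y ^ 2 - y) - 1 := by nlinarith
    positivity
  have heq : (c ^ 2 * A * (L ^ 2 / (t * x ^ 3))) * (c ^ 2 * A * (L ^ 2 / (x * t ^ 3))) -
      (A - 1 + c ^ 2 * (L ^ 2 / (x ^ 2 * t ^ 2)) * A - c * u * A) ^ 2 =
      (y ^ 2 * A) ^ 2 - (A - 1 + y ^ 2 * A - y * A) ^ 2 := by
    rw [hy, hu]
    field_simp
  rw [heq]
  exact key
end

section
/- Let f(x,t) = x·t·(2^(L/(xt)) − 1) with L > 0, and consider minimizing Σᵢ (N0/hᵢ)·f(xᵢ, tᵢ) over xᵢ, tᵢ > 0 subject to Σᵢ xᵢ = B and Σ_{i∈Sⱼ} Wᵢ/(Dᵢ − tᵢ) ≤ Cⱼ for each j, where {Sⱼ} partitions the index set. Then the feasible set (intersected with 0 < tᵢ < Dᵢ) is convex and the objective is convex, so this is a convex optimization problem; in particular any local minimum is a global minimum. -/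
open Real intervalIntegral

private lemma combo_pos' {a b x y : ℝ} (ha : 0 ≤ a) (hb : 0 ≤ b) (hab : a + b = 1)
    (hx : 0 < x) (hy : 0 < y) : 0 < a * x + b * y := by
  rcases ha.lt_or_eq with h | h
  · exact add_pos_of_pos_of_nonneg (mul_pos h hx) (mul_nonneg hb hy.le)
  · have hb1 : b = 1 := by linarith
    simp [← h, hb1, hy]

private lemma inv_combo' {a b u v : ℝ} (ha : 0 ≤ a) (hb : 0 ≤ b) (hab : a + b = 1)
    (hu : 0 < u) (hv : 0 < v) : (a * u + b * v)⁻¹ ≤ a * u⁻¹ + b * v⁻¹ := by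
  have hw : 0 < a * u + b * v := combo_pos' ha hb hab hu hv
  rw [inv_le_iff_one_le_mul₀ hw]
  have e : (a * u⁻¹ + b * v⁻¹) * (a * u + b * v)
      = a^2 + b^2 + 2*a*b + a*b*((u-v)^2*(u⁻¹*v⁻¹)) := by
    field_simp
    ring
  rw [e]
  nlinarith [mul_nonneg (mul_nonneg ha hb)
    (mul_nonneg (sq_nonneg (u-v)) (mul_nonneg (inv_pos.2 hu).le (inv_pos.2 hv).le))]

private lemma inv_mul_combo' {a b x1 y1 x2 y2 : ℝ} (ha : 0 ≤ a) (hb : 0 ≤ b) (hab : a + b = 1)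
    (hx1 : 0 < x1) (hy1 : 0 < y1) (hx2 : 0 < x2) (hy2 : 0 < y2) :
    ((a * x1 + b * x2) * (a * y1 + b * y2))⁻¹ ≤ a * (x1 * y1)⁻¹ + b * (x2 * y2)⁻¹ := by
  have hx : x1 ^ a * x2 ^ b ≤ a * x1 + b * x2 :=
    Real.geom_mean_le_arith_mean2_weighted ha hb hx1.le hx2.le hab
  have hy : y1 ^ a * y2 ^ b ≤ a * y1 + b * y2 :=
    Real.geom_mean_le_arith_mean2_weighted ha hb hy1.le hy2.le hab
  have hgy : 0 < y1 ^ a * y2 ^ b := by positivity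
  have step1 : ((a * x1 + b * x2) * (a * y1 + b * y2))⁻¹
      ≤ ((x1 ^ a * x2 ^ b) * (y1 ^ a * y2 ^ b))⁻¹ := by
    apply inv_anti₀ (by positivity)
    exact mul_le_mul hx hy hgy.le (by positivity)
  refine step1.trans ?_
  have e1 : ((x1 ^ a * x2 ^ b) * (y1 ^ a * y2 ^ b)) = (x1*y1) ^ a * (x2*y2) ^ b := by
    rw [Real.mul_rpow hx1.le hy1.le, Real.mul_rpow hx2.le hy2.le]
    ring
  rw [e1]
  have e2 : ((x1*y1) ^ a * (x2*y2) ^ b)⁻¹ = ((x1*y1)⁻¹) ^ a * ((x2*y2)⁻¹) ^ b := by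
    rw [mul_inv, ← Real.inv_rpow (by positivity), ← Real.inv_rpow (by positivity)]
  rw [e2]
  exact Real.geom_mean_le_arith_mean2_weighted ha hb (by positivity) (by positivity) hab

private lemma psi_integral' {c w : ℝ} (hw : 0 < w) :
    ∫ s in (0:ℝ)..c, Real.exp (s * w⁻¹) = w * (Real.exp (c * w⁻¹) - 1) := by
  have h := intervalIntegral.integral_comp_mul_right (a := 0) (b := c) Real.exp
    (inv_ne_zero hw.ne')
  rw [h, integral_exp]
  simp [smul_eq_mul, inv_inv]

private lemma key' {c a b x1 y1 x2 y2 : ℝ} (hc : 0 < c) (ha : 0 ≤ a) (hb : 0 ≤ b) (hab : a + b = 1)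
    (hx1 : 0 < x1) (hy1 : 0 < y1) (hx2 : 0 < x2) (hy2 : 0 < y2) :
    (a*x1+b*x2)*(a*y1+b*y2)*(Real.exp (c * ((a*x1+b*x2)*(a*y1+b*y2))⁻¹) - 1)
      ≤ a * (x1*y1*(Real.exp (c*(x1*y1)⁻¹) - 1)) + b * (x2*y2*(Real.exp (c*(x2*y2)⁻¹) - 1)) := by
  have hu : 0 < x1*y1 := mul_pos hx1 hy1
  have hv : 0 < x2*y2 := mul_pos hx2 hy2
  have hw : 0 < (a*x1+b*x2)*(a*y1+b*y2) :=
    mul_pos (combo_pos' ha hb hab hx1 hx2) (combo_pos' ha hb hab hy1 hy2)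
  rw [← psi_integral' hw, ← psi_integral' hu, ← psi_integral' hv]
  have ci : ∀ r : ℝ, IntervalIntegrable (fun s => Real.exp (s * r)) MeasureTheory.volume 0 c :=
    fun r => (Real.continuous_exp.comp (continuous_id.mul continuous_const)).intervalIntegrable 0 c
  have cabc : IntervalIntegrable
      (fun s => a * Real.exp (s * (x1*y1)⁻¹) + b * Real.exp (s * (x2*y2)⁻¹))
      MeasureTheory.volume 0 c :=
    ((ci _).const_mul a).add ((ci _).const_mul b)
  calc ∫ s in (0:ℝ)..c, Real.exp (s * ((a*x1+b*x2)*(a*y1+b*y2))⁻¹)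
      ≤ ∫ s in (0:ℝ)..c, (a * Real.exp (s * (x1*y1)⁻¹) + b * Real.exp (s * (x2*y2)⁻¹)) := by
        apply intervalIntegral.integral_mono_on hc.le (ci _) cabc
        intro s hs
        have hinv := inv_mul_combo' ha hb hab hx1 hy1 hx2 hy2
        have h2 : s * ((a*x1+b*x2)*(a*y1+b*y2))⁻¹ ≤ a * (s * (x1*y1)⁻¹) + b * (s * (x2*y2)⁻¹) := by
          have := mul_le_mul_of_nonneg_left hinv hs.1
          nlinarith
        calc Real.exp (s * ((a*x1+b*x2)*(a*y1+b*y2))⁻¹)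
            ≤ Real.exp (a * (s * (x1*y1)⁻¹) + b * (s * (x2*y2)⁻¹)) := Real.exp_le_exp.2 h2
          _ ≤ a * Real.exp (s * (x1*y1)⁻¹) + b * Real.exp (s * (x2*y2)⁻¹) := by
              have := convexOn_exp.2 (Set.mem_univ (s * (x1*y1)⁻¹)) (Set.mem_univ (s * (x2*y2)⁻¹))
                ha hb hab
              simpa [smul_eq_mul] using this
    _ = (a * ∫ s in (0:ℝ)..c, Real.exp (s * (x1*y1)⁻¹))
        + (b * ∫ s in (0:ℝ)..c, Real.exp (s * (x2*y2)⁻¹)) := by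
        rw [intervalIntegral.integral_add ((ci _).const_mul a) ((ci _).const_mul b),
          intervalIntegral.integral_const_mul, intervalIntegral.integral_const_mul]

private lemma energy_eq {Li x y : ℝ} (hL : 0 < Li) (hx : 0 < x) (hy : 0 < y) :
    x * y * ((2 : ℝ) ^ (Li / (x * y)) - 1)
      = x * y * (Real.exp ((Real.log 2 * Li) * (x * y)⁻¹) - 1) := by
  rw [Real.rpow_def_of_pos (by norm_num : (0:ℝ) < 2)]
  ring_nf

/-- Problem P2 (relaxed) is a convex optimization problem: the feasible set is convex,
the objective is convex on it, and any local minimum is a global minimum. -/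
theorem stmt9 {ι J : Type*} [Fintype ι] [Fintype J] [DecidableEq J] (s : ι → J)
    (N0 B : ℝ) (h L W D : ι → ℝ) (C : J → ℝ)
    (hN0 : 0 < N0) (hB : 0 < B) (hh : ∀ i, 0 < h i) (hL : ∀ i, 0 < L i)
    (hW : ∀ i, 0 < W i) (hD : ∀ i, 0 < D i) (hC : ∀ j, 0 < C j) :
    let S : Set ((ι → ℝ) × (ι → ℝ)) :=
      {p | (∀ i, 0 < p.1 i) ∧ (∀ i, 0 < p.2 i ∧ p.2 i < D i) ∧
        (∑ i, p.1 i = B) ∧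
        ∀ j, ∑ i ∈ Finset.univ.filter (fun i => s i = j), W i / (D i - p.2 i) ≤ C j}
    let F : (ι → ℝ) × (ι → ℝ) → ℝ :=
      fun p => ∑ i, (N0 / h i) * (p.1 i * p.2 i * ((2 : ℝ) ^ (L i / (p.1 i * p.2 i)) - 1))
    Convex ℝ S ∧ ConvexOn ℝ S F ∧
      ∀ p ∈ S, IsLocalMinOn F S p → ∀ q ∈ S, F p ≤ F q := by
  intro S F
  have hSconv : Convex ℝ S := by
    rintro p ⟨hp1, hp2, hp3, hp4⟩ q ⟨hq1, hq2, hq3, hq4⟩ a b ha hb hab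
    have hcomp1 : ∀ i, (a • p + b • q).1 i = a * p.1 i + b * q.1 i := fun i => rfl
    have hcomp2 : ∀ i, (a • p + b • q).2 i = a * p.2 i + b * q.2 i := fun i => rfl
    refine ⟨fun i => ?_, fun i => ⟨?_, ?_⟩, ?_, fun j => ?_⟩
    · rw [hcomp1]; exact combo_pos' ha hb hab (hp1 i) (hq1 i)
    · rw [hcomp2]; exact combo_pos' ha hb hab (hp2 i).1 (hq2 i).1
    · rw [hcomp2]
      have := combo_pos' ha hb hab (sub_pos.2 (hp2 i).2) (sub_pos.2 (hq2 i).2)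
      have hD' : a * D i + b * D i = D i := by rw [← add_mul, hab, one_mul]
      linarith
    · simp only [hcomp1]
      rw [Finset.sum_add_distrib, ← Finset.mul_sum, ← Finset.mul_sum, hp3, hq3, ← add_mul, hab,
        one_mul]
    · have hpt : ∀ i, W i / (D i - (a • p + b • q).2 i)
          ≤ a * (W i / (D i - p.2 i)) + b * (W i / (D i - q.2 i)) := by
        intro i
        rw [hcomp2]
        have hu : 0 < D i - p.2 i := sub_pos.2 (hp2 i).2
        have hv : 0 < D i - q.2 i := sub_pos.2 (hq2 i).2
        have he : D i - (a * p.2 i + b * q.2 i) = a * (D i - p.2 i) + b * (D i - q.2 i) := by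
          linear_combination (-(D i)) * hab
        rw [he, div_eq_mul_inv, div_eq_mul_inv, div_eq_mul_inv]
        have := inv_combo' ha hb hab hu hv
        have hWn : 0 ≤ W i := (hW i).le
        calc W i * (a * (D i - p.2 i) + b * (D i - q.2 i))⁻¹
            ≤ W i * (a * (D i - p.2 i)⁻¹ + b * (D i - q.2 i)⁻¹) :=
              mul_le_mul_of_nonneg_left this hWn
          _ = a * (W i * (D i - p.2 i)⁻¹) + b * (W i * (D i - q.2 i)⁻¹) := by ring
      calc ∑ i ∈ Finset.univ.filter (fun i => s i = j), W i / (D i - (a • p + b • q).2 i)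
          ≤ ∑ i ∈ Finset.univ.filter (fun i => s i = j),
              (a * (W i / (D i - p.2 i)) + b * (W i / (D i - q.2 i))) :=
            Finset.sum_le_sum fun i _ => hpt i
        _ = a * (∑ i ∈ Finset.univ.filter (fun i => s i = j), W i / (D i - p.2 i))
            + b * (∑ i ∈ Finset.univ.filter (fun i => s i = j), W i / (D i - q.2 i)) := by
            rw [Finset.sum_add_distrib, ← Finset.mul_sum, ← Finset.mul_sum]
        _ ≤ a * C j + b * C j := by
            have h1 := hp4 j; have h2 := hq4 j
            have := hC j
            nlinarith
        _ = C j := by rw [← add_mul, hab, one_mul]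
  have hFconv : ConvexOn ℝ S F := by
    refine ⟨hSconv, ?_⟩
    rintro p ⟨hp1, hp2, _, _⟩ q ⟨hq1, hq2, _, _⟩ a b ha hb hab
    have hcomp1 : ∀ i, (a • p + b • q).1 i = a * p.1 i + b * q.1 i := fun i => rfl
    have hcomp2 : ∀ i, (a • p + b • q).2 i = a * p.2 i + b * q.2 i := fun i => rfl
    simp only [smul_eq_mul, F]
    calc ∑ i, (N0 / h i) * ((a • p + b • q).1 i * (a • p + b • q).2 i
            * ((2 : ℝ) ^ (L i / ((a • p + b • q).1 i * (a • p + b • q).2 i)) - 1))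
        ≤ ∑ i, (a * ((N0 / h i) * (p.1 i * p.2 i * ((2 : ℝ) ^ (L i / (p.1 i * p.2 i)) - 1)))
            + b * ((N0 / h i) * (q.1 i * q.2 i * ((2 : ℝ) ^ (L i / (q.1 i * q.2 i)) - 1)))) := by
          apply Finset.sum_le_sum
          intro i _
          rw [hcomp1, hcomp2]
          have hc : 0 < Real.log 2 * L i :=
            mul_pos (Real.log_pos one_lt_two) (hL i)
          have hx1 := hp1 i; have hy1 := (hp2 i).1; have hx2 := hq1 i; have hy2 := (hq2 i).1
          have hwpos : 0 < (a * p.1 i + b * q.1 i) * (a * p.2 i + b * q.2 i) :=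
            mul_pos (combo_pos' ha hb hab hx1 hx2) (combo_pos' ha hb hab hy1 hy2)
          rw [energy_eq (hL i) (combo_pos' ha hb hab hx1 hx2) (combo_pos' ha hb hab hy1 hy2),
            energy_eq (hL i) hx1 hy1, energy_eq (hL i) hx2 hy2]
          have hkey := key' hc ha hb hab hx1 hy1 hx2 hy2
          have hν : 0 ≤ N0 / h i := div_nonneg hN0.le (hh i).le
          calc (N0 / h i) * ((a * p.1 i + b * q.1 i) * (a * p.2 i + b * q.2 i)
                * (Real.exp ((Real.log 2 * L i)
                  * ((a * p.1 i + b * q.1 i) * (a * p.2 i + b * q.2 i))⁻¹) - 1))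
              ≤ (N0 / h i) * (a * (p.1 i * p.2 i
                  * (Real.exp ((Real.log 2 * L i) * (p.1 i * p.2 i)⁻¹) - 1))
                + b * (q.1 i * q.2 i
                  * (Real.exp ((Real.log 2 * L i) * (q.1 i * q.2 i)⁻¹) - 1))) :=
                mul_le_mul_of_nonneg_left hkey hν
            _ = a * ((N0 / h i) * (p.1 i * p.2 i
                  * (Real.exp ((Real.log 2 * L i) * (p.1 i * p.2 i)⁻¹) - 1)))
                + b * ((N0 / h i) * (q.1 i * q.2 i
                  * (Real.exp ((Real.log 2 * L i) * (q.1 i * q.2 i)⁻¹) - 1))) := by ring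
      _ = a * (∑ i, (N0 / h i) * (p.1 i * p.2 i * ((2 : ℝ) ^ (L i / (p.1 i * p.2 i)) - 1)))
          + b * (∑ i, (N0 / h i) * (q.1 i * q.2 i * ((2 : ℝ) ^ (L i / (q.1 i * q.2 i)) - 1))) := by
          rw [Finset.sum_add_distrib, ← Finset.mul_sum, ← Finset.mul_sum]
  refine ⟨hSconv, hFconv, fun p hp hloc q hq => ?_⟩
  exact (IsMinOn.of_isLocalMinOn_of_convexOn hp hloc hFconv) hq
end

section
/- Relaxation exactness: in the optimization problem of minimizing Σᵢ (N0/hᵢ)·xᵢ·tᵢ·(2^(Lᵢ/(xᵢtᵢ)) − 1) subject to Σᵢ xᵢ = B and Σ_{i∈Sⱼ} Wᵢ/(Dᵢ − tᵢ) ≤ Cⱼ (0 < tᵢ < Dᵢ), any optimal solution satisfies the computing constraint with equality: Σ_{i∈Sⱼ} Wᵢ/(Dᵢ − tᵢ) = Cⱼ for every j. -/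
/-!
If the load of class `j` had slack, raise the time `tᵢ₀` of one task `i₀ ∈ Sⱼ` until that load
equals `Cⱼ`; no other class is affected, so the point stays feasible. Since
`y (2 ^ (L / y) - 1) = L log 2 · (exp c - 1) / c` with `c = L log 2 / y`, and secant slopes of the
strictly convex `exp` increase, this term strictly decreases in `y = xᵢ₀ tᵢ₀`, so the objective
strictly drops, contradicting optimality.
-/

open Real Set Finset

theorem exp_sub_one_div_strictMonoOn : StrictMonoOn (fun x => (exp x - 1) / x) (Ioi 0) := by
  intro x hx y hy hxy
  simpa using strictConvexOn_exp.secant_strict_mono (a := 0) (mem_univ _) (mem_univ x)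
    (mem_univ y) (ne_of_gt hx) (ne_of_gt hy) hxy

theorem mul_rpow_div_sub_one_strictAntiOn {a b : ℝ} (ha : 1 < a) (hb : 0 < b) :
    StrictAntiOn (fun y => y * (a ^ (b / y) - 1)) (Ioi 0) := by
  have hc : 0 < b * log a := mul_pos hb (log_pos ha)
  have hsecant : ∀ y : ℝ, 0 < y →
      y * (a ^ (b / y) - 1) = b * log a * ((exp (b * log a / y) - 1) / (b * log a / y)) := by
    intro y hy
    have := (log_pos ha).ne'
    rw [rpow_def_of_pos (by linarith)]
    field_simp
  intro u hu v hv huv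
  dsimp only
  rw [hsecant u hu, hsecant v hv]
  exact mul_lt_mul_of_pos_left (exp_sub_one_div_strictMonoOn (div_pos hc hv) (div_pos hc hu)
    (div_lt_div_of_pos_left hc hu huv)) hc

theorem exists_div_sub_eq_add {W D t δ : ℝ} (hW : 0 < W) (htD : t < D) (hδ : 0 < δ) :
    ∃ t', t < t' ∧ t' < D ∧ W / (D - t') = W / (D - t) + δ := by
  have hA : 0 < W / (D - t) + δ := by have := div_pos hW (sub_pos.2 htD); linarith
  refine ⟨D - W / (W / (D - t) + δ), ?_, by linarith [div_pos hW hA], ?_⟩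
  · rw [lt_sub_comm, div_lt_iff₀ hA, mul_add, mul_div_cancel₀ _ (sub_pos.2 htD).ne']
    nlinarith [sub_pos.2 htD]
  · rw [sub_sub_cancel, div_div_cancel₀ hW.ne']

theorem mul_mul_two_rpow_div_sub_one_lt {c l x t t' : ℝ} (hc : 0 < c) (hl : 0 < l) (hx : 0 < x)
    (ht : 0 < t) (htt' : t < t') :
    c * (x * t' * (2 ^ (l / (x * t')) - 1)) < c * (x * t * (2 ^ (l / (x * t)) - 1)) :=
  mul_lt_mul_of_pos_left (mul_rpow_div_sub_one_strictAntiOn one_lt_two hl (mul_pos hx ht)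
    (mul_pos hx (ht.trans htt')) (mul_lt_mul_of_pos_left htt' hx)) hc

theorem sum_filter_div_sub_update {ι J : Type*} [Fintype ι] [DecidableEq ι] [DecidableEq J]
    (s : ι → J) (W D t : ι → ℝ) (i₀ : ι) (t' : ℝ) (j : J) :
    ∑ i ∈ univ.filter (fun i => s i = j), W i / (D i - Function.update t i₀ t' i) =
      ∑ i ∈ univ.filter (fun i => s i = j), W i / (D i - t i) +
        if s i₀ = j then W i₀ / (D i₀ - t') - W i₀ / (D i₀ - t i₀) else 0 := by
  have hupd : (fun i => W i / (D i - Function.update t i₀ t' i)) =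
      Function.update (fun i => W i / (D i - t i)) i₀ (W i₀ / (D i₀ - t')) :=
    funext fun i => Function.apply_update (fun i x => W i / (D i - x)) t i₀ t' i
  rw [hupd]
  split_ifs with hj
  · have hmem : i₀ ∈ univ.filter (fun i => s i = j) := by simpa using hj
    rw [sum_update_of_mem hmem, sum_eq_add_sum_sdiff_singleton_of_mem hmem]
    ring
  · rw [sum_update_of_notMem (by simpa using hj), add_zero]

theorem stmt10_general {ι J : Type*} [Fintype ι] [DecidableEq J] (s : ι → J)
    (hs : ∀ j, ∃ i, s i = j)
    (N0 B : ℝ) (h L W D : ι → ℝ) (C : J → ℝ)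
    (hN0 : 0 < N0) (hh : ∀ i, 0 < h i) (hL : ∀ i, 0 < L i)
    (hW : ∀ i, 0 < W i)
    (S : Set ((ι → ℝ) × (ι → ℝ)))
    (hS : S = {p | (∀ i, 0 < p.1 i) ∧ (∀ i, 0 < p.2 i ∧ p.2 i < D i) ∧
        (∑ i, p.1 i = B) ∧
        ∀ j, ∑ i ∈ Finset.univ.filter (fun i => s i = j), W i / (D i - p.2 i) ≤ C j})
    (F : (ι → ℝ) × (ι → ℝ) → ℝ)
    (hF : F = fun p => ∑ i, (N0 / h i) *
      (p.1 i * p.2 i * ((2 : ℝ) ^ (L i / (p.1 i * p.2 i)) - 1)))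
    (p : (ι → ℝ) × (ι → ℝ)) (hp : p ∈ S) (hopt : ∀ q ∈ S, F p ≤ F q) :
    ∀ j, ∑ i ∈ Finset.univ.filter (fun i => s i = j), W i / (D i - p.2 i) = C j := by
  classical
  rw [hS] at hp
  obtain ⟨hx, ht, hsum, hload⟩ := hp
  intro j
  refine (hload j).eq_of_not_lt fun hslack => ?_
  obtain ⟨i₀, rfl⟩ := hs j
  obtain ⟨t', ht't, ht'D, ht'load⟩ :=
    exists_div_sub_eq_add (hW i₀) (ht i₀).2 (sub_pos.2 hslack)
  let q : (ι → ℝ) × (ι → ℝ) := (p.1, Function.update p.2 i₀ t')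
  have hqS : q ∈ S := by
    rw [hS]
    refine ⟨hx, fun i => ?_, hsum, fun j => ?_⟩
    · rcases eq_or_ne i i₀ with rfl | hi
      · simpa [q] using ⟨(ht i).1.trans ht't, ht'D⟩
      · simpa [q, hi] using ht i
    · rw [sum_filter_div_sub_update]
      split_ifs with hj
      · subst hj
        linarith
      · simpa using hload j
  have hdecr :=
    mul_mul_two_rpow_div_sub_one_lt (div_pos hN0 (hh i₀)) (hL i₀) (hx i₀) (ht i₀).1 ht't
  have hFq : F q < F p := by
    rw [hF]
    refine sum_lt_sum (fun i _ => ?_) ⟨i₀, mem_univ _, by simpa [q] using hdecr⟩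
    rcases eq_or_ne i i₀ with rfl | hi
    · simpa [q] using hdecr.le
    · simp [q, hi]
  exact (hopt q hqS).not_gt hFq

/-- Relaxation exactness: any optimal solution of the relaxed problem satisfies the
computing-capacity constraints with equality. -/
theorem stmt10 {ι J : Type*} [Fintype ι] [Fintype J] [DecidableEq J] (s : ι → J)
    (hs : ∀ j, ∃ i, s i = j)
    (N0 B : ℝ) (h L W D : ι → ℝ) (C : J → ℝ)
    (hN0 : 0 < N0) (hB : 0 < B) (hh : ∀ i, 0 < h i) (hL : ∀ i, 0 < L i)
    (hW : ∀ i, 0 < W i) (hD : ∀ i, 0 < D i) (hC : ∀ j, 0 < C j)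
    (S : Set ((ι → ℝ) × (ι → ℝ)))
    (hS : S = {p | (∀ i, 0 < p.1 i) ∧ (∀ i, 0 < p.2 i ∧ p.2 i < D i) ∧
        (∑ i, p.1 i = B) ∧
        ∀ j, ∑ i ∈ Finset.univ.filter (fun i => s i = j), W i / (D i - p.2 i) ≤ C j})
    (F : (ι → ℝ) × (ι → ℝ) → ℝ)
    (hF : F = fun p => ∑ i, (N0 / h i) *
      (p.1 i * p.2 i * ((2 : ℝ) ^ (L i / (p.1 i * p.2 i)) - 1)))
    (p : (ι → ℝ) × (ι → ℝ)) (hp : p ∈ S) (hopt : ∀ q ∈ S, F p ≤ F q) :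
    ∀ j, ∑ i ∈ Finset.univ.filter (fun i => s i = j), W i / (D i - p.2 i) = C j :=
  stmt10_general s hs N0 B h L W D C hN0 hh hL hW S hS F hF p hp hopt
end

section
/- For fixed L > 0, x > 0, D > 0, W > 0 and μ ≥ 0, the function F(t) = (N0·x/h)·(2^(L/(xt)) − (L/(xt))·2^(L/(xt))·ln 2 − 1) + μ·W/(D − t)² is strictly increasing on (0, D), where N0, h > 0. -/
lemma aux_anti (c : ℝ) (hc : 0 < c) :
    StrictAntiOn (fun u : ℝ => Real.exp (c * u) * (1 - c * u)) (Set.Ici 0) := by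
  apply strictAntiOn_of_deriv_neg (convex_Ici 0)
  · fun_prop
  · intro u hu
    rw [interior_Ici] at hu
    have hlin : HasDerivAt (fun y : ℝ => c * y) (c * 1) u :=
      (hasDerivAt_id u).const_mul c
    have he : HasDerivAt (fun y : ℝ => Real.exp (c * y)) (Real.exp (c * u) * (c * 1)) u :=
      hlin.exp
    have hg : HasDerivAt (fun y : ℝ => 1 - c * y) (-(c * 1)) u := hlin.const_sub 1
    have hd : HasDerivAt (fun y : ℝ => Real.exp (c * y) * (1 - c * y))
        (Real.exp (c * u) * (c * 1) * (1 - c * u) + Real.exp (c * u) * (-(c * 1))) u :=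
      he.mul hg
    rw [hd.deriv]
    have := Real.exp_pos (c * u)
    nlinarith [mul_pos (mul_pos hc hc) (mul_pos hu this)]

/-- The KKT stationarity function of the computing-resource subproblem is strictly
increasing on (0, D). -/
theorem stmt11 (L x D W N0 h μ : ℝ) (hL : 0 < L) (hx : 0 < x) (hD : 0 < D)
    (hW : 0 < W) (hN0 : 0 < N0) (hh : 0 < h) (hμ : 0 ≤ μ) :
    StrictMonoOn
      (fun t : ℝ => (N0 * x / h) * ((2 : ℝ) ^ (L / (x * t)) -
        (L / (x * t)) * (2 : ℝ) ^ (L / (x * t)) * Real.log 2 - 1) +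
        μ * W / (D - t) ^ 2)
      (Set.Ioo 0 D) := by
  have hfeq : (fun t : ℝ => (N0 * x / h) * ((2 : ℝ) ^ (L / (x * t)) -
        (L / (x * t)) * (2 : ℝ) ^ (L / (x * t)) * Real.log 2 - 1) +
        μ * W / (D - t) ^ 2)
      = (fun t : ℝ => (N0 * x / h) *
          (Real.exp (Real.log 2 * (L / (x * t))) * (1 - Real.log 2 * (L / (x * t))) - 1) +
        μ * W / (D - t) ^ 2) := by
    funext t
    rw [Real.rpow_def_of_pos (by norm_num : (0:ℝ) < 2)]
    ring_nf
  rw [hfeq]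
  intro s hs t ht hst
  obtain ⟨hs0, hsD⟩ := hs
  obtain ⟨ht0, htD⟩ := ht
  have hc : 0 < Real.log 2 := Real.log_pos (by norm_num)
  have hus : 0 < L / (x * s) := div_pos hL (mul_pos hx hs0)
  have hut : 0 < L / (x * t) := div_pos hL (mul_pos hx ht0)
  have hule : L / (x * t) < L / (x * s) :=
    div_lt_div_of_pos_left hL (mul_pos hx hs0) (by nlinarith)
  have h1 : Real.exp (Real.log 2 * (L / (x * s))) * (1 - Real.log 2 * (L / (x * s)))
      < Real.exp (Real.log 2 * (L / (x * t))) * (1 - Real.log 2 * (L / (x * t))) :=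
    aux_anti _ hc hut.le hus.le hule
  have hcoef : 0 < N0 * x / h := div_pos (mul_pos hN0 hx) hh
  have h2 : μ * W / (D - s) ^ 2 ≤ μ * W / (D - t) ^ 2 := by
    apply div_le_div_of_nonneg_left (mul_nonneg hμ hW.le) (pow_pos (by linarith) 2)
    nlinarith
  have h3 := mul_lt_mul_of_pos_left (sub_lt_sub_right h1 1) hcoef
  linarith
end

section
/- Energy as a function of deadline: for fixed L, x, N0, h > 0, the minimal energy E(t) = (N0·x·t/h)·(2^(L/(xt)) − 1) needed to transmit L bits in time t over bandwidth x is strictly decreasing and strictly convex in t on (0, ∞), with limit N0·L·ln 2/h as t → ∞ and limit +∞ as t → 0⁺. -/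
open Real Set Filter Topology

/-!
Writing `E(t) = c·t·(e^(k/t) − 1)` with `u = k/t`, the derivative is `c·(e^u·(1 − u) − 1)`, negative
because `1 − u < e^(−u)`, and the second derivative is `c·k²·e^(k/t)/t³ > 0`. As `t → ∞`,
`t·(e^(k/t) − 1)` is a difference quotient of `s ↦ e^(k·s)` at `0`, hence tends to `k`; as `t → 0⁺`
it equals `k·(e^u − 1)/u` with `u → ∞`.
-/

lemma Real.exp_mul_one_sub_lt_one {u : ℝ} (hu : u ≠ 0) : exp u * (1 - u) < 1 := by
  have h := add_one_lt_exp (neg_ne_zero.mpr hu)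
  calc exp u * (1 - u) < exp u * exp (-u) := by
        gcongr
        linarith
    _ = 1 := by rw [← exp_add, add_neg_cancel, exp_zero]

lemma hasDerivAt_const_div {𝕜 : Type*} [NontriviallyNormedField 𝕜] (k : 𝕜) {t : 𝕜}
    (ht : t ≠ 0) : HasDerivAt (fun s => k / s) (-(k / t ^ 2)) t := by
  simpa [div_eq_mul_inv, mul_comm] using (hasDerivAt_inv ht).const_mul k

/-- With `c = N0·x/h` and `k = L·ln 2/x`, `transmitEnergy c k t` is the paper's `E(t)`:
`(N0·x·t/h)(2^(L/(xt)) − 1) = c·t·(e^(k/t) − 1)`. -/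
noncomputable def transmitEnergy (c k t : ℝ) : ℝ := c * t * (exp (k / t) - 1)

namespace transmitEnergy

variable {c k : ℝ}

lemma hasDerivAt {t : ℝ} (ht : t ≠ 0) :
    HasDerivAt (transmitEnergy c k) (c * (exp (k / t) * (1 - k / t) - 1)) t := by
  have := ((hasDerivAt_id t).const_mul c).mul ((hasDerivAt_const_div k ht).exp.sub_const 1)
  refine this.congr_deriv ?_
  simp only [id]
  field_simp
  ring

lemma hasDerivAt_deriv {t : ℝ} (ht : t ≠ 0) :
    HasDerivAt (fun s => c * (exp (k / s) * (1 - k / s) - 1))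
      (c * k ^ 2 * exp (k / t) / t ^ 3) t := by
  have hk := hasDerivAt_const_div k ht
  have := ((hk.exp.mul (hk.const_sub 1)).sub_const 1).const_mul c
  refine this.congr_deriv ?_
  field_simp
  ring

lemma continuousOn : ContinuousOn (transmitEnergy c k) (Ioi 0) :=
  fun _ ht => (hasDerivAt (ne_of_gt ht)).continuousAt.continuousWithinAt

lemma strictAntiOn (hc : 0 < c) (hk : k ≠ 0) : StrictAntiOn (transmitEnergy c k) (Ioi 0) := by
  refine strictAntiOn_of_deriv_neg (convex_Ioi 0) continuousOn fun t ht => ?_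
  rw [interior_Ioi] at ht
  rw [(hasDerivAt (ne_of_gt ht)).deriv]
  exact mul_neg_of_pos_of_neg hc
    (sub_neg.mpr (exp_mul_one_sub_lt_one (div_ne_zero hk (ne_of_gt ht))))

lemma strictConvexOn (hc : 0 < c) (hk : k ≠ 0) :
    StrictConvexOn ℝ (Ioi 0) (transmitEnergy c k) := by
  refine strictConvexOn_of_deriv2_pos' (convex_Ioi 0) continuousOn fun t (ht : 0 < t) => ?_
  have hderiv : deriv (transmitEnergy c k) =ᶠ[𝓝 t] fun s => c * (exp (k / s) * (1 - k / s) - 1) :=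
    (eventually_ne_nhds ht.ne').mono fun s hs => (hasDerivAt hs).deriv
  rw [Function.iterate_succ_apply, Function.iterate_one, hderiv.deriv_eq,
    (hasDerivAt_deriv ht.ne').deriv]
  positivity

lemma tendsto_atTop : Tendsto (transmitEnergy c k) atTop (𝓝 (c * k)) := by
  have hslope : HasDerivAt (fun s => exp (k * s)) k 0 := by
    simpa using ((hasDerivAt_id (0 : ℝ)).const_mul k).exp
  have := (hslope.tendsto_slope_zero_right.comp tendsto_inv_atTop_nhdsGT_zero).const_mul c
  refine this.congr' ?_
  filter_upwards [eventually_ne_atTop 0] with t ht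
  simp only [Function.comp_apply, smul_eq_mul, inv_inv, zero_add, mul_zero, exp_zero,
    transmitEnergy, div_eq_mul_inv]
  ring

lemma tendsto_nhdsGT_zero (hc : 0 < c) (hk : 0 < k) :
    Tendsto (transmitEnergy c k) (𝓝[>] 0) atTop := by
  have hu : Tendsto (fun t : ℝ => k / t) (𝓝[>] 0) atTop := by
    simpa [div_eq_mul_inv] using tendsto_inv_nhdsGT_zero.const_mul_atTop hk
  have := ((tendsto_mul_exp_add_div_pow_atTop k (-k) 1 hk).comp hu).const_mul_atTop hc
  refine this.congr' ?_
  filter_upwards [self_mem_nhdsWithin] with t (ht : 0 < t)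
  simp only [Function.comp_apply, pow_one, transmitEnergy]
  field_simp
  ring

end transmitEnergy

/-- The minimal energy `E(t) = (N0·x·t/h)·(2^(L/(xt)) − 1)` is strictly decreasing and
strictly convex on (0,∞), with limit `N0·L·ln 2/h` as t → ∞ and +∞ as t → 0⁺. -/
theorem stmt18 (L x N0 h : ℝ) (hL : 0 < L) (hx : 0 < x) (hN0 : 0 < N0) (hh : 0 < h) :
    StrictAntiOn (fun t : ℝ => N0 * x * t / h * ((2 : ℝ) ^ (L / (x * t)) - 1))
      (Set.Ioi 0) ∧
    StrictConvexOn ℝ (Set.Ioi 0)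
      (fun t : ℝ => N0 * x * t / h * ((2 : ℝ) ^ (L / (x * t)) - 1)) ∧
    Filter.Tendsto (fun t : ℝ => N0 * x * t / h * ((2 : ℝ) ^ (L / (x * t)) - 1))
      Filter.atTop (nhds (N0 * L * Real.log 2 / h)) ∧
    Filter.Tendsto (fun t : ℝ => N0 * x * t / h * ((2 : ℝ) ^ (L / (x * t)) - 1))
      (nhdsWithin 0 (Set.Ioi 0)) Filter.atTop := by
  have hE : (fun t : ℝ => N0 * x * t / h * ((2 : ℝ) ^ (L / (x * t)) - 1))
      = transmitEnergy (N0 * x / h) (log 2 * L / x) := by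
    funext t
    rw [transmitEnergy, rpow_def_of_pos two_pos, div_div, mul_div_assoc (log 2)]
    ring
  have hc : 0 < N0 * x / h := by positivity
  have hk : 0 < log 2 * L / x := by have := log_pos one_lt_two; positivity
  have hck : N0 * x / h * (log 2 * L / x) = N0 * L * log 2 / h := by field_simp
  rw [hE]
  exact ⟨transmitEnergy.strictAntiOn hc hk.ne', transmitEnergy.strictConvexOn hc hk.ne',
    hck ▸ transmitEnergy.tendsto_atTop, transmitEnergy.tendsto_nhdsGT_zero hc hk⟩
end

section
/- Water-filling structure for bandwidth: at an optimum of minimizing Σᵢ cᵢ·xᵢ·(2^(aᵢ/xᵢ) − 1) subject to Σᵢ xᵢ = B, xᵢ > 0 (with constants aᵢ, cᵢ > 0), there exists λ > 0 such that for every i: cᵢ·(2^(aᵢ/xᵢ) − (aᵢ/xᵢ)·2^(aᵢ/xᵢ)·ln 2 − 1) + λ = 0. -/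
/-!
Moving a small amount `ε` of bandwidth from user `j` to user `i` keeps the feasible point
feasible, so at an optimum the derivative of the objective along that direction vanishes: the
partial derivatives of all summands at `x` coincide. Their common value is `-λ`, and it is
negative because `(1 - v)·eᵛ < 1` for `v ≠ 0`, applied to `v = (aᵢ/xᵢ)·ln 2`.
-/

open Real Filter Topology

lemma one_sub_mul_exp_lt_one {v : ℝ} (hv : v ≠ 0) : (1 - v) * exp v < 1 := by
  have h := add_one_lt_exp (neg_ne_zero.2 hv)
  have hexp : exp (-v) * exp v = 1 := by rw [← exp_add, neg_add_cancel, exp_zero]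
  nlinarith [exp_pos v]

lemma rpow_sub_mul_rpow_mul_log_sub_one_neg {b u : ℝ} (hb0 : 0 < b) (hb1 : b ≠ 1)
    (hu : u ≠ 0) :
    b ^ u - u * b ^ u * log b - 1 < 0 := by
  have h := one_sub_mul_exp_lt_one (mul_ne_zero (log_ne_zero_of_pos_of_ne_one hb0 hb1) hu)
  rw [rpow_def_of_pos hb0]
  linear_combination h

lemma hasDerivAt_mul_rpow_div_sub_one {b : ℝ} (hb : 0 < b) (a : ℝ) {t : ℝ} (ht : t ≠ 0) :
    HasDerivAt (fun s => s * (b ^ (a / s) - 1))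
      (b ^ (a / t) - a / t * b ^ (a / t) * log b - 1) t := by
  have hdiv : HasDerivAt (fun s => a / s) (a * -(t ^ 2)⁻¹) t := by
    simpa only [div_eq_mul_inv] using (hasDerivAt_inv ht).const_mul a
  refine ((hasDerivAt_id' t).fun_mul ((hdiv.const_rpow hb).sub_const 1)).congr_deriv ?_
  field_simp
  ring

lemma IsLocalMinOn.hasDerivAt_eq_of_sum_eq {ι : Type*} [Fintype ι] [DecidableEq ι]
    {f : ι → ℝ → ℝ} {f' x : ι → ℝ}
    (hmin : IsLocalMinOn (fun y => ∑ k, f k (y k)) {y | ∑ k, y k = ∑ k, x k} x)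
    (hf : ∀ k, HasDerivAt (f k) (f' k) (x k)) (i j : ι) :
    f' i = f' j := by
  set S := {y : ι → ℝ | ∑ k, y k = ∑ k, x k} with hS
  set d : ι → ℝ := Pi.single i 1 - Pi.single j 1
  set line : ℝ → ι → ℝ := fun ε => x + ε • d
  have hline_zero : line 0 = x := by simp [line]
  have hline_tendsto : Tendsto line (𝓝 0) (𝓝[S] (line 0)) := by
    refine tendsto_nhdsWithin_iff.2 ⟨(by fun_prop : Continuous line).tendsto 0, ?_⟩
    refine .of_forall fun ε => ?_
    simp [hS, line, d, Finset.sum_add_distrib, ← Finset.mul_sum]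
  have hmin_line : IsLocalMin (fun ε => ∑ k, f k (line ε k)) 0 := by
    rw [← hline_zero] at hmin
    exact hmin.comp_tendsto hline_tendsto
  have hderiv : HasDerivAt (fun ε => ∑ k, f k (line ε k)) (∑ k, f' k * d k) 0 := by
    refine HasDerivAt.fun_sum fun k _ => ?_
    have hk : HasDerivAt (fun ε : ℝ => x k + ε * d k) (d k) 0 := by
      simpa using ((hasDerivAt_id (0 : ℝ)).mul_const (d k)).const_add (x k)
    exact (hf k).comp_of_eq 0 hk (by simp [line])
  have hstationary := hmin_line.hasDerivAt_eq_zero hderiv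
  simp only [d, Pi.sub_apply, mul_sub, Finset.sum_sub_distrib, Pi.single_apply, mul_ite,
    mul_one, mul_zero, Finset.sum_ite_eq', Finset.mem_univ, if_true] at hstationary
  linarith

theorem stmt19_general {ι : Type*} [Fintype ι] (a c : ι → ℝ) (B : ℝ)
    (ha : ∀ i, 0 < a i) (hc : ∀ i, 0 < c i)
    (x : ι → ℝ) (hx : ∀ i, 0 < x i) (hsum : ∑ i, x i = B)
    (hopt : ∀ y : ι → ℝ, (∀ i, 0 < y i) → ∑ i, y i = B →
      ∑ i, c i * (x i * ((2 : ℝ) ^ (a i / x i) - 1)) ≤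
        ∑ i, c i * (y i * ((2 : ℝ) ^ (a i / y i) - 1))) :
    ∃ lam : ℝ, 0 < lam ∧ ∀ i,
      c i * ((2 : ℝ) ^ (a i / x i) - (a i / x i) * (2 : ℝ) ^ (a i / x i) * Real.log 2 - 1)
        + lam = 0 := by
  classical
  set g : ι → ℝ → ℝ := fun i t =>
    c i * ((2 : ℝ) ^ (a i / t) - (a i / t) * (2 : ℝ) ^ (a i / t) * Real.log 2 - 1)
  rcases isEmpty_or_nonempty ι with _ | ⟨⟨i₀⟩⟩
  · exact ⟨1, one_pos, fun i => isEmptyElim i⟩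
  have hpos : ∀ᶠ y in 𝓝 x, ∀ i, 0 < y i :=
    eventually_all.2 fun i =>
      (continuous_apply i).continuousAt.eventually (lt_mem_nhds (hx i))
  have hmin : IsLocalMinOn (fun y => ∑ i, c i * (y i * ((2 : ℝ) ^ (a i / y i) - 1)))
      {y | ∑ i, y i = ∑ i, x i} x := by
    filter_upwards [nhdsWithin_le_nhds hpos, self_mem_nhdsWithin] with y hy hy_sum
    exact hopt y hy (hy_sum.trans hsum)
  have hequal (i : ι) : g i (x i) = g i₀ (x i₀) :=
    hmin.hasDerivAt_eq_of_sum_eq (f' := fun k => g k (x k))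
      (fun k => (hasDerivAt_mul_rpow_div_sub_one two_pos (a k) (hx k).ne').const_mul (c k)) i i₀
  have hneg : g i₀ (x i₀) < 0 := mul_neg_of_pos_of_neg (hc i₀)
    (rpow_sub_mul_rpow_mul_log_sub_one_neg two_pos (by norm_num) (div_pos (ha i₀) (hx i₀)).ne')
  refine ⟨-g i₀ (x i₀), neg_pos.2 hneg, fun i => ?_⟩
  show g i (x i) + _ = 0
  rw [hequal i]
  ring

/-- Water-filling structure: at an optimum of `min Σᵢ cᵢ·xᵢ·(2^(aᵢ/xᵢ) − 1)` subject to
`Σᵢ xᵢ = B`, `xᵢ > 0`, there exists λ > 0 satisfying the KKT stationarity condition. -/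
theorem stmt19 {ι : Type*} [Fintype ι] (a c : ι → ℝ) (B : ℝ)
    (ha : ∀ i, 0 < a i) (hc : ∀ i, 0 < c i) (hB : 0 < B)
    (x : ι → ℝ) (hx : ∀ i, 0 < x i) (hsum : ∑ i, x i = B)
    (hopt : ∀ y : ι → ℝ, (∀ i, 0 < y i) → ∑ i, y i = B →
      ∑ i, c i * (x i * ((2 : ℝ) ^ (a i / x i) - 1)) ≤
        ∑ i, c i * (y i * ((2 : ℝ) ^ (a i / y i) - 1))) :
    ∃ lam : ℝ, 0 < lam ∧ ∀ i,
      c i * ((2 : ℝ) ^ (a i / x i) - (a i / x i) * (2 : ℝ) ^ (a i / x i) * Real.log 2 - 1)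
        + lam = 0 :=
  stmt19_general a c B ha hc x hx hsum hopt
end
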